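/- Subadditivity of the trace square root: for positive semidefinite symmetric n×n matrices A and B, tr(√(A + B)) ≤ tr(√A) + tr(√B). -/

import Mathlib

open Matrix
open scoped Classical

/-- The positive semidefinite square root of a matrix (zero if not PSD). -/
noncomputable def sqrtM {n : ℕ} (A : Matrix (Fin n) (Fin n) ℝ) : Matrix (Fin n) (Fin n) ℝ :=
  if h : A.PosSemidef then
    h.1.eigenvectorUnitary.1 * diagonal ((RCLike.ofReal : ℝ → ℝ) ∘ (√·) ∘ h.1.eigenvalues) *
      (star h.1.eigenvectorUnitary : Matrix (Fin n) (Fin n) ℝ)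
  else 0

/-- Euclidean norm of a vector. -/
noncomputable def euclNorm {n : ℕ} (v : Fin n → ℝ) : ℝ := Real.sqrt (v ⬝ᵥ v)

/-- The ℓ₂ operator (spectral) norm of a matrix. -/
noncomputable def opNorm {n : ℕ} (A : Matrix (Fin n) (Fin n) ℝ) : ℝ :=
  ⨆ u : {u : Fin n → ℝ // euclNorm u ≤ 1}, euclNorm (A *ᵥ u)

/-!
Write `P = √A`, `Q = √B`, `S = √(A + B)` and `T = P + Q`, and suppose first that `A` and `B` are
positive definite. Since `(S - T) T⁻¹ (S - T)` is positive semidefinite,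
`2 tr S ≤ tr (T⁻¹ S²) + tr T`. Expanding `T² = S² + PQ + QP` gives
`tr (T⁻¹ S²) = tr T - tr (P T⁻¹ Q) - tr (Q T⁻¹ P)`, and `P T⁻¹ Q = (P⁻¹ + Q⁻¹)⁻¹` is positive
definite, so `tr S ≤ tr T = tr P + tr Q`. The semidefinite case follows by replacing `A`, `B` with
`A + ε`, `B + ε` and letting `ε → 0⁺`: in terms of the eigenvalues `λᵢ` of `A`,
`tr √(A + ε) = ∑ᵢ √(λᵢ + ε)` is continuous in `ε`.
-/

open Filter Topology Set
open scoped MatrixOrder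

namespace Matrix

variable {ι : Type*} [Fintype ι] [DecidableEq ι]

lemma two_mul_trace_le_trace_inv_mul_mul_self_add_trace {S T : Matrix ι ι ℝ}
    (hS : S.IsHermitian) (hT : T.PosDef) :
    2 * S.trace ≤ (T⁻¹ * (S * S)).trace + T.trace := by
  have hdet := (isUnit_iff_isUnit_det T).mp hT.isUnit
  have hsq : ((S - T)ᴴ * T⁻¹ * (S - T)).PosSemidef :=
    hT.inv.posSemidef.conjTranspose_mul_mul_same _
  have hexpand : (S - T)ᴴ * T⁻¹ * (S - T) = S * T⁻¹ * S - S - S + T := by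
    simp only [conjTranspose_sub, hS.eq, hT.isHermitian.eq, sub_mul, mul_sub, Matrix.mul_assoc,
      mul_nonsing_inv _ hdet, nonsing_inv_mul _ hdet, Matrix.mul_one, Matrix.one_mul]
    abel
  have := hsq.trace_nonneg
  rw [hexpand, trace_add, trace_sub, trace_sub, trace_mul_cycle, trace_mul_comm] at this
  linarith

lemma mul_add_inv_mul_eq_inv_add_inv {R : Type*} [CommRing R] {P Q : Matrix ι ι R}
    (hP : IsUnit P) (hQ : IsUnit Q) (hPQ : IsUnit (P + Q)) :
    P * (P + Q)⁻¹ * Q = (P⁻¹ + Q⁻¹)⁻¹ := by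
  rw [isUnit_iff_isUnit_det] at hP hQ hPQ
  refine (inv_eq_right_inv ?_).symm
  calc (P⁻¹ + Q⁻¹) * (P * (P + Q)⁻¹ * Q) = Q⁻¹ * ((Q + P) * (P + Q)⁻¹) * Q := by
        simp only [add_mul, mul_add, ← Matrix.mul_assoc, nonsing_inv_mul _ hP,
          nonsing_inv_mul _ hQ, Matrix.one_mul]
    _ = 1 := by rw [add_comm Q, mul_nonsing_inv _ hPQ, Matrix.mul_one, nonsing_inv_mul _ hQ]

lemma PosDef.mul_add_inv_mul {P Q : Matrix ι ι ℝ} (hP : P.PosDef) (hQ : Q.PosDef) :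
    (P * (P + Q)⁻¹ * Q).PosDef := by
  rw [mul_add_inv_mul_eq_inv_add_inv hP.isUnit hQ.isUnit (hP.add hQ).isUnit]
  exact (hP.inv.add hQ.inv).inv

lemma trace_le_add_of_mul_self_eq_add {P Q S : Matrix ι ι ℝ} (hP : P.PosDef) (hQ : Q.PosDef)
    (hS : S.IsHermitian) (h : S * S = P * P + Q * Q) : S.trace ≤ P.trace + Q.trace := by
  have hT := hP.add hQ
  have hsplit : (P + Q)⁻¹ * (S * S) + (P + Q)⁻¹ * (Q * P) + (P + Q)⁻¹ * (P * Q) = P + Q := by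
    have hsq : (P + Q) * (P + Q) = P * P + Q * Q + Q * P + P * Q := by noncomm_ring
    rw [h, ← mul_add, ← mul_add, ← hsq,
      nonsing_inv_mul_cancel_left _ _ ((isUnit_iff_isUnit_det _).mp hT.isUnit)]
  have hQP : ((P + Q)⁻¹ * (Q * P)).trace = (P * (P + Q)⁻¹ * Q).trace := by
    rw [trace_mul_comm, ← trace_mul_cycle]
  have hPQ : ((P + Q)⁻¹ * (P * Q)).trace = (Q * (Q + P)⁻¹ * P).trace := by
    rw [trace_mul_comm, ← trace_mul_cycle, add_comm Q]
  have htrace := congrArg trace hsplit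
  rw [trace_add, trace_add, trace_add, hQP, hPQ] at htrace
  linarith [two_mul_trace_le_trace_inv_mul_mul_self_add_trace hS hT, trace_add P Q,
    (hP.mul_add_inv_mul hQ).posSemidef.trace_nonneg,
    (hQ.mul_add_inv_mul hP).posSemidef.trace_nonneg]

lemma PosDef.trace_cfcSqrt_add_le {A B : Matrix ι ι ℝ} (hA : A.PosDef) (hB : B.PosDef) :
    (CFC.sqrt (A + B)).trace ≤ (CFC.sqrt A).trace + (CFC.sqrt B).trace := by
  refine trace_le_add_of_mul_self_eq_add (IsStrictlyPositive.sqrt A).posDef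
    (IsStrictlyPositive.sqrt B).posDef (CFC.sqrt_nonneg _).posSemidef.isHermitian ?_
  rw [CFC.sqrt_mul_sqrt_self _ (hA.add hB).posSemidef.nonneg, CFC.sqrt_mul_sqrt_self _,
    CFC.sqrt_mul_sqrt_self _]

lemma IsHermitian.trace_cfc {𝕜 : Type*} [RCLike 𝕜] {A : Matrix ι ι 𝕜} (hA : A.IsHermitian)
    (f : ℝ → ℝ) : (cfc f A).trace = ∑ i, (f (hA.eigenvalues i) : 𝕜) := by
  rw [hA.cfc_eq, IsHermitian.cfc, Unitary.conjStarAlgAut_apply, trace_mul_cycle,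
    Unitary.coe_star_mul_self, one_mul, trace_diagonal]
  rfl

lemma PosSemidef.trace_cfcSqrt_add_smul_one {A : Matrix ι ι ℝ} (hA : A.PosSemidef) {ε : ℝ}
    (hε : 0 ≤ ε) : (CFC.sqrt (A + ε • 1)).trace = ∑ i, √(hA.1.eigenvalues i + ε) := by
  have hshift : A + ε • 1 = cfc (· + ε) A := by
    rw [cfc_add_const ε (fun x => x) A, cfc_id' ℝ A, Algebra.algebraMap_eq_smul_one]
  have hnonneg : 0 ≤ A + ε • 1 := (hA.add (PosSemidef.one.smul hε)).nonneg
  rw [CFC.sqrt_eq_real_sqrt _ hnonneg, cfcₙ_eq_cfc, hshift, ← cfc_comp' Real.sqrt (· + ε) A,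
    hA.1.trace_cfc]
  rfl

lemma PosSemidef.tendsto_trace_cfcSqrt_add_smul_one {A : Matrix ι ι ℝ} (hA : A.PosSemidef) :
    Tendsto (fun ε : ℝ => (CFC.sqrt (A + ε • 1)).trace) (𝓝[>] 0) (𝓝 (CFC.sqrt A).trace) := by
  have hcont : Continuous fun ε : ℝ => ∑ i, √(hA.1.eigenvalues i + ε) := by fun_prop
  have hlim := (hcont.tendsto 0).mono_left (nhdsWithin_le_nhds (s := Ioi 0))
  have hzero : ∑ i, √(hA.1.eigenvalues i + 0) = (CFC.sqrt A).trace := by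
    simpa using (hA.trace_cfcSqrt_add_smul_one le_rfl).symm
  rw [hzero] at hlim
  exact hlim.congr' (eventually_nhdsWithin_of_forall fun ε hε =>
    (hA.trace_cfcSqrt_add_smul_one (le_of_lt hε)).symm)

end Matrix

lemma sqrtM_eq_cfcSqrt {n : ℕ} {A : Matrix (Fin n) (Fin n) ℝ} (hA : A.PosSemidef) :
    sqrtM A = CFC.sqrt A := by
  rw [sqrtM, dif_pos hA, CFC.sqrt_eq_cfc, cfc_nnreal_eq_real _ A, hA.1.cfc_eq]
  simp only [IsHermitian.cfc, Real.coe_sqrt, Real.coe_toNNReal', Unitary.conjStarAlgAut_apply]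
  congr 3
  funext i
  simp [max_eq_left (hA.eigenvalues_nonneg i)]

theorem trace_sqrt_subadditive {n : ℕ} {A B : Matrix (Fin n) (Fin n) ℝ}
    (hA : A.PosSemidef) (hB : B.PosSemidef) :
    (sqrtM (A + B)).trace ≤ (sqrtM A).trace + (sqrtM B).trace := by
  rw [sqrtM_eq_cfcSqrt hA, sqrtM_eq_cfcSqrt hB, sqrtM_eq_cfcSqrt (hA.add hB)]
  have hperturbed : ∀ ε ∈ Ioi (0 : ℝ), (CFC.sqrt (A + B + (2 * ε) • 1)).trace ≤
      (CFC.sqrt (A + ε • 1)).trace + (CFC.sqrt (B + ε • 1)).trace := fun ε hε => by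
    have hε1 : (ε • 1 : Matrix (Fin n) (Fin n) ℝ).PosDef := PosDef.one.smul hε
    have := (PosDef.posSemidef_add hA hε1).trace_cfcSqrt_add_le (PosDef.posSemidef_add hB hε1)
    rwa [add_add_add_comm, ← add_smul, ← two_mul] at this
  have hdouble : Tendsto (2 * ·) (𝓝[>] (0 : ℝ)) (𝓝[>] 0) :=
    tendsto_iff_comap.mpr (comap_mulLeft_nhdsGT_zero two_pos).ge
  exact le_of_tendsto_of_tendsto ((hA.add hB).tendsto_trace_cfcSqrt_add_smul_one.comp hdouble)
    (hA.tendsto_trace_cfcSqrt_add_smul_one.add hB.tendsto_trace_cfcSqrt_add_smul_one)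
    (eventually_nhdsWithin_of_forall hperturbed)
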